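/- In the setting of a right-detachable ρ-adjacency (j₁,k₁) for a self-avoiding walk ρ on ℤ² attaining its minimal height at ρ₀ and maximal height at ρ_ℓ, the vertex ρ_{k₁} lies exactly one unit directly above ρ_{j₁} (rather than one unit below). -/
import Mathlib

set_option maxHeartbeats 1600000


/-- A nearest-neighbour step on `ℤ²`. -/
def IsStep (p q : ℤ × ℤ) : Prop := |q.1 - p.1| + |q.2 - p.2| = 1

/-- A self-avoiding walk of length `m` on `ℤ²` (with arbitrary starting point). -/
def IsSAWalk (m : ℕ) (γ : ℕ → ℤ × ℤ) : Prop :=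
  (∀ i < m, IsStep (γ i) (γ (i + 1))) ∧ (∀ i ≤ m, ∀ j ≤ m, γ i = γ j → i = j)

/-- A self-avoiding polygon of length `m` on `ℤ²`, as a closed walk. -/
def IsSAPolygon (m : ℕ) (q : ℕ → ℤ × ℤ) : Prop :=
  0 < m ∧ (∀ i < m, IsStep (q i) (q (i + 1))) ∧ q m = q 0 ∧
  (∀ i < m, ∀ j < m, q i = q j → i = j)

/-- The vertex set of a walk of length `m`. -/
def wVerts (m : ℕ) (γ : ℕ → ℤ × ℤ) : Set (ℤ × ℤ) := {p | ∃ i ≤ m, γ i = p}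

/-- The edge set of a walk of length `m`. -/
def wEdges (m : ℕ) (γ : ℕ → ℤ × ℤ) : Set (Sym2 (ℤ × ℤ)) :=
  {e | ∃ i < m, e = s(γ i, γ (i + 1))}

/-- `(j, k)` is a right-detachable `ρ`-adjacency for a self-avoiding walk `ρ` of
length `ℓ`: `{ρ j, ρ k}` is a vertically oriented unit edge; the horizontal edges of
the plaquette `P` having this edge as its right border belong to `ρ` while its
vertical edges do not; the modification `ρ Δ P` (removing `P`'s horizontal edges,
inserting its vertical ones) is a disjoint union of a walk `ρ'` and a polygon `Q`;
and every translate of `Q` directly to the right is disjoint from `ρ'`. -/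
def RightDetachable (ℓ : ℕ) (ρ : ℕ → ℤ × ℤ) (j k : ℕ) : Prop :=
  j < k ∧ k ≤ ℓ ∧
  ∃ a : ℤ × ℤ,
    ({ρ j, ρ k} : Set (ℤ × ℤ)) = {a, a + (0, 1)} ∧
    s(a + (-1, 0), a) ∈ wEdges ℓ ρ ∧
    s(a + (-1, 1), a + (0, 1)) ∈ wEdges ℓ ρ ∧
    s(a + (-1, 0), a + (-1, 1)) ∉ wEdges ℓ ρ ∧
    s(a, a + (0, 1)) ∉ wEdges ℓ ρ ∧
    ∃ (m : ℕ) (ρ' : ℕ → ℤ × ℤ) (m' : ℕ) (Q : ℕ → ℤ × ℤ),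
      IsSAWalk m ρ' ∧ IsSAPolygon m' Q ∧
      Disjoint (wVerts m ρ') (wVerts m' Q) ∧
      (wEdges ℓ ρ \ {s(a + (-1, 0), a), s(a + (-1, 1), a + (0, 1))}) ∪
          {s(a + (-1, 0), a + (-1, 1)), s(a, a + (0, 1))}
        = wEdges m ρ' ∪ wEdges m' Q ∧
      ∀ t : ℕ, Disjoint ((fun p : ℤ × ℤ => p + ((t : ℤ), 0)) '' wVerts m' Q)
        (wVerts m ρ')

lemma isStep_iff {p q : ℤ × ℤ} : IsStep p q ↔
    (q.1 = p.1 + 1 ∧ q.2 = p.2) ∨ (q.1 = p.1 - 1 ∧ q.2 = p.2) ∨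
    (q.1 = p.1 ∧ q.2 = p.2 + 1) ∨ (q.1 = p.1 ∧ q.2 = p.2 - 1) := by
  unfold IsStep
  rw [Int.abs_eq_natAbs, Int.abs_eq_natAbs]
  omega

lemma pair_ne {x y u v : ℤ} (h : ¬(x = u ∧ y = v)) : ((x, y) : ℤ × ℤ) ≠ (u, v) := by
  intro he
  rw [Prod.mk.injEq] at he
  exact h he

lemma pair_eq {x y u v : ℤ} (h : ((x, y) : ℤ × ℤ) = (u, v)) : x = u ∧ y = v := by
  rwa [Prod.mk.injEq] at h

/-- A horizontal lattice edge `{p,q}` crosses the vertical upward ray through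
`(g - 1/4, y + 1/4)` : it lies at height `> y` and spans columns `g-1`, `g`. -/
def hcross (p q : ℤ × ℤ) (g y : ℤ) : Prop :=
  p.2 = q.2 ∧ y < p.2 ∧ ((p.1 = g - 1 ∧ q.1 = g) ∨ (p.1 = g ∧ q.1 = g - 1))

/-- A vertical lattice edge `{p,q}` at column `g` spanning heights `y`, `y+1`. -/
def vcross (p q : ℤ × ℤ) (g y : ℤ) : Prop :=
  p.1 = g ∧ q.1 = g ∧ ((p.2 = y ∧ q.2 = y + 1) ∨ (p.2 = y + 1 ∧ q.2 = y))

/-- Points strictly above `y` at column `g`. -/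
def Ur (g y : ℤ) (p : ℤ × ℤ) : Prop := p.1 = g ∧ y < p.2

instance hcross.dec : ∀ p q g y, Decidable (hcross p q g y) := fun _ _ _ _ => by
  unfold hcross; infer_instance
instance vcross.dec : ∀ p q g y, Decidable (vcross p q g y) := fun _ _ _ _ => by
  unfold vcross; infer_instance
instance Ur.dec : ∀ g y p, Decidable (Ur g y p) := fun _ _ _ => by
  unfold Ur; infer_instance

lemma parity_flips (b : ℕ → Bool) :
    ∀ n, (((Finset.range n).filter fun i => b i ≠ b (i + 1)).card) % 2
      = (if b 0 ≠ b n then 1 else 0) % 2 := by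
  intro n
  induction n with
  | zero => simp
  | succ n ih =>
    rw [Finset.range_add_one, Finset.filter_insert]
    by_cases h : b n ≠ b (n + 1)
    · rw [if_pos h, Finset.card_insert_of_notMem (by simp)]
      cases hb0 : b 0 <;> cases hbn : b n <;> cases hbn1 : b (n + 1) <;>
        simp_all <;> omega
    · rw [if_neg h]
      cases hb0 : b 0 <;> cases hbn : b n <;> cases hbn1 : b (n + 1) <;>
        simp_all <;> omega

set_option maxHeartbeats 1000000 in
lemma pathpar (γ : ℕ → ℤ × ℤ) (n : ℕ) (g y : ℤ)
    (hstep : ∀ i < n, IsStep (γ i) (γ (i + 1))) :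
    ((((Finset.range n).filter fun i => hcross (γ i) (γ (i + 1)) g y).card
      + ((Finset.range n).filter fun i => hcross (γ i) (γ (i + 1)) (g + 1) y).card)
      + ((Finset.range n).filter fun i => vcross (γ i) (γ (i + 1)) g y).card) % 2
    = ((if Ur g y (γ 0) then 1 else 0) + (if Ur g y (γ n) then 1 else 0)) % 2 := by
  classical
  set b : ℕ → Bool := fun i => decide (Ur g y (γ i)) with hb
  have key : ∀ i < n, ((b i ≠ b (i + 1)) ↔
      (hcross (γ i) (γ (i + 1)) g y ∨ hcross (γ i) (γ (i + 1)) (g + 1) y ∨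
        vcross (γ i) (γ (i + 1)) g y)) := by
    intro i hi
    have hd := isStep_iff.mp (hstep i hi)
    rw [hb]
    simp only [ne_eq, decide_eq_decide]
    unfold Ur hcross vcross
    rcases hd with ⟨h1, h2⟩ | ⟨h1, h2⟩ | ⟨h1, h2⟩ | ⟨h1, h2⟩ <;> omega
  have hA : ((Finset.range n).filter fun i => b i ≠ b (i + 1))
      = (((Finset.range n).filter fun i => hcross (γ i) (γ (i + 1)) g y)
        ∪ ((Finset.range n).filter fun i => hcross (γ i) (γ (i + 1)) (g + 1) y))
        ∪ ((Finset.range n).filter fun i => vcross (γ i) (γ (i + 1)) g y) := by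
    ext i
    simp only [Finset.mem_filter, Finset.mem_union, Finset.mem_range]
    constructor
    · rintro ⟨hi, hne⟩
      rcases (key i hi).mp hne with h | h | h
      · exact Or.inl (Or.inl ⟨hi, h⟩)
      · exact Or.inl (Or.inr ⟨hi, h⟩)
      · exact Or.inr ⟨hi, h⟩
    · rintro ((⟨hi, h⟩ | ⟨hi, h⟩) | ⟨hi, h⟩) <;>
        exact ⟨hi, (key i hi).mpr (by tauto)⟩
  have hd12 : Disjoint ((Finset.range n).filter fun i => hcross (γ i) (γ (i + 1)) g y)
      ((Finset.range n).filter fun i => hcross (γ i) (γ (i + 1)) (g + 1) y) := by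
    rw [Finset.disjoint_left]
    intro i h1 h2
    simp only [Finset.mem_filter] at h1 h2
    have := h1.2; have := h2.2
    unfold hcross at *; omega
  have hd3 : Disjoint (((Finset.range n).filter fun i => hcross (γ i) (γ (i + 1)) g y)
        ∪ ((Finset.range n).filter fun i => hcross (γ i) (γ (i + 1)) (g + 1) y))
      ((Finset.range n).filter fun i => vcross (γ i) (γ (i + 1)) g y) := by
    rw [Finset.disjoint_left]
    intro i h1 h2
    simp only [Finset.mem_union, Finset.mem_filter] at h1 h2
    have := h2.2
    rcases h1 with h1 | h1 <;> · have := h1.2; unfold hcross vcross at *; omega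
  have hcard := parity_flips b n
  rw [hA, Finset.card_union_of_disjoint hd3, Finset.card_union_of_disjoint hd12] at hcard
  have e0 : (if b 0 ≠ b n then 1 else 0)
      = ((if Ur g y (γ 0) then 1 else 0) + (if Ur g y (γ n) then 1 else 0)) % 2 := by
    rw [hb]
    by_cases h0 : Ur g y (γ 0) <;> by_cases hn : Ur g y (γ n) <;> simp [h0, hn]
  omega

/-- The parity potential: crossings of the walk-prefix with the upward ray at
`(x - 1/4, y + 1/4)`, plus the crossing with the horizontal right-ray at height
`a2 + 1` starting at `(a1 - 1, a2 + 1)`. -/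
def Dfun (ρ : ℕ → ℤ × ℤ) (jm : ℕ) (a1 a2 x y : ℤ) : ℕ :=
  ((Finset.range jm).filter fun i => hcross (ρ i) (ρ (i + 1)) x y).card
    + (if y ≤ a2 ∧ a1 ≤ x then 1 else 0)

lemma Dfun_horiz (ρ : ℕ → ℤ × ℤ) (jm : ℕ) (a1 a2 x y : ℤ)
    (hstep : ∀ i < jm, IsStep (ρ i) (ρ (i + 1)))
    (hS : ∀ i < jm, ¬ vcross (ρ i) (ρ (i + 1)) x y)
    (h0 : ¬ ((ρ 0).1 = x ∧ y < (ρ 0).2))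
    (hend : ρ jm = (a1 - 1, a2 + 1)) :
    Dfun ρ jm a1 a2 x y % 2 = Dfun ρ jm a1 a2 (x + 1) y % 2 := by
  have hpp := pathpar ρ jm x y hstep
  have hCS : ((Finset.range jm).filter fun i => vcross (ρ i) (ρ (i + 1)) x y).card = 0 := by
    rw [Finset.card_eq_zero, Finset.filter_eq_empty_iff]
    intro i hi
    exact hS i (Finset.mem_range.mp hi)
  have hU0 : ¬ Ur x y (ρ 0) := h0
  have hUe : Ur x y (ρ jm) ↔ (x = a1 - 1 ∧ y ≤ a2) := by
    rw [hend]; unfold Ur; constructor <;> rintro ⟨h1, h2⟩ <;> exact ⟨by omega, by omega⟩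
  rw [hCS, if_neg hU0] at hpp
  unfold Dfun
  by_cases hc : x = a1 - 1 ∧ y ≤ a2
  · rw [if_pos (hUe.mpr hc)] at hpp
    split_ifs <;> omega
  · rw [if_neg (fun h => hc (hUe.mp h))] at hpp
    split_ifs <;> omega

lemma Dfun_vert (ρ : ℕ → ℤ × ℤ) (jm : ℕ) (a1 a2 x y : ℤ)
    (hS : ∀ i < jm, ¬ (hcross (ρ i) (ρ (i + 1)) x y ∧ (ρ i).2 = y + 1))
    (hind : ¬ (y = a2 ∧ a1 ≤ x)) :
    Dfun ρ jm a1 a2 x y = Dfun ρ jm a1 a2 x (y + 1) := by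
  unfold Dfun
  have hfil : ((Finset.range jm).filter fun i => hcross (ρ i) (ρ (i + 1)) x y)
      = ((Finset.range jm).filter fun i => hcross (ρ i) (ρ (i + 1)) x (y + 1)) := by
    apply Finset.filter_congr
    intro i hi
    have hi' := Finset.mem_range.mp hi
    constructor
    · rintro ⟨h1, h2, h3⟩
      refine ⟨h1, ?_, h3⟩
      by_contra hcon
      exact hS i hi' ⟨⟨h1, h2, h3⟩, by omega⟩
    · rintro ⟨h1, h2, h3⟩
      exact ⟨h1, by omega, h3⟩
  rw [hfil]
  congr 1
  split_ifs <;> omega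

lemma edge_verts {m : ℕ} {γ : ℕ → ℤ × ℤ} {x y : ℤ × ℤ} (h : s(x, y) ∈ wEdges m γ) :
    x ∈ wVerts m γ ∧ y ∈ wVerts m γ := by
  obtain ⟨i, hi, he⟩ := h
  rcases Sym2.eq_iff.mp he.symm with ⟨h1, h2⟩ | ⟨h1, h2⟩
  · exact ⟨⟨i, by omega, h1⟩, ⟨i + 1, by omega, h2⟩⟩
  · exact ⟨⟨i + 1, by omega, h2⟩, ⟨i, by omega, h1⟩⟩

lemma edge_inc {ℓ : ℕ} {ρ : ℕ → ℤ × ℤ} (hρ : IsSAWalk ℓ ρ) {t : ℕ} (ht : t ≤ ℓ) {u : ℤ × ℤ}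
    (h : s(ρ t, u) ∈ wEdges ℓ ρ) : (1 ≤ t ∧ u = ρ (t - 1)) ∨ (t < ℓ ∧ u = ρ (t + 1)) := by
  obtain ⟨i, hi, he⟩ := h
  rcases Sym2.eq_iff.mp he with ⟨h1, h2⟩ | ⟨h1, h2⟩
  · have : t = i := hρ.2 t ht i (by omega) h1
    subst this
    exact Or.inr ⟨hi, h2⟩
  · have : t = i + 1 := hρ.2 t ht (i + 1) (by omega) h1
    subst this
    exact Or.inl ⟨by omega, by simpa using h2⟩

lemma polygon_two_edges {m : ℕ} {Q : ℕ → ℤ × ℤ} (hQ : IsSAPolygon m Q) (hm : 3 ≤ m)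
    {v : ℤ × ℤ} (hv : v ∈ wVerts m Q) :
    ∃ u1 u2, u1 ≠ u2 ∧ s(v, u1) ∈ wEdges m Q ∧ s(v, u2) ∈ wEdges m Q := by
  obtain ⟨hm0, hstep, hclose, hinj⟩ := hQ
  obtain ⟨s, hs, hQs⟩ := hv
  have hexists : ∃ s' < m, Q s' = v := by
    rcases Nat.lt_or_ge s m with h | h
    · exact ⟨s, h, hQs⟩
    · have : s = m := by omega
      subst this
      exact ⟨0, by omega, by rw [← hclose]; exact hQs⟩
  obtain ⟨s', hs', hQs'⟩ := hexists
  rcases Nat.eq_zero_or_pos s' with h0 | h0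
  · subst h0
    refine ⟨Q 1, Q (m - 1), ?_, ⟨0, by omega, by rw [hQs']⟩, ⟨m - 1, by omega, ?_⟩⟩
    · intro heq
      have := hinj 1 (by omega) (m - 1) (by omega) heq
      omega
    · rw [← hQs', show m - 1 + 1 = m from by omega, hclose]
      exact Sym2.eq_swap
  · refine ⟨Q (s' - 1), Q (s' + 1), ?_, ⟨s' - 1, by omega, ?_⟩, ⟨s', hs', by rw [hQs']⟩⟩
    · intro heq
      rcases Nat.lt_or_ge (s' + 1) m with h | h
      · have := hinj (s' - 1) (by omega) (s' + 1) h heq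
        omega
      · have hsm : s' + 1 = m := by omega
        rw [hsm, hclose] at heq
        have := hinj (s' - 1) (by omega) 0 (by omega) heq
        omega
    · rw [show s' - 1 + 1 = s' from by omega, hQs']
      exact Sym2.eq_swap

/-- In a right-detachable `ρ`-adjacency `(j₁, k₁)` for a self-avoiding walk `ρ`
attaining its minimal height at `ρ 0` and its maximal height at `ρ ℓ`, the vertex
`ρ k₁` lies exactly one unit directly above `ρ j₁`. -/
theorem right_detachable_upper_endpoint (ℓ : ℕ) (ρ : ℕ → ℤ × ℤ)
    (hρ : IsSAWalk ℓ ρ)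
    (hmin : ∀ i ≤ ℓ, (ρ 0).2 ≤ (ρ i).2) (hmax : ∀ i ≤ ℓ, (ρ i).2 ≤ (ρ ℓ).2)
    (j₁ k₁ : ℕ) (h₁ : RightDetachable ℓ ρ j₁ k₁) :
    ρ k₁ = ρ j₁ + (0, 1) := by
  obtain ⟨hjk, hkl, a, hpair, hB, hT, hE2n, hE1n, m, ρ', m', Q, hρ'w, hQp, hdisj, huni, htr⟩ := h₁
  obtain ⟨a1, a2⟩ := a
  have eb1 : ((a1, a2) : ℤ × ℤ) + (0, 1) = (a1, a2 + 1) := by rw [Prod.mk_add_mk, Prod.mk.injEq]; omega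
  have ec0 : ((a1, a2) : ℤ × ℤ) + (-1, 0) = (a1 - 1, a2) := by rw [Prod.mk_add_mk, Prod.mk.injEq]; omega
  have ec1 : ((a1, a2) : ℤ × ℤ) + (-1, 1) = (a1 - 1, a2 + 1) := by rw [Prod.mk_add_mk, Prod.mk.injEq]; omega
  rw [eb1] at hpair hE1n
  rw [ec0, ec1] at hE2n huni
  rw [ec0] at hB
  rw [ec1, eb1] at hT
  rw [eb1] at huni
  have hinj := hρ.2
  have hjl : j₁ < ℓ := by omega
  have hjmem : ρ j₁ ∈ ({(a1, a2), (a1, a2 + 1)} : Set (ℤ × ℤ)) := by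
    rw [← hpair]; exact Set.mem_insert _ _
  have hkmem : ρ k₁ ∈ ({(a1, a2), (a1, a2 + 1)} : Set (ℤ × ℤ)) := by
    rw [← hpair]; exact Set.mem_insert_of_mem _ rfl
  have hjkne : ρ j₁ ≠ ρ k₁ := fun h => by
    have := hinj j₁ (by omega) k₁ (by omega) h; omega
  rcases Set.mem_insert_iff.mp hjmem with hbj | hbj
  · -- good case
    rcases Set.mem_insert_iff.mp hkmem with hbk | hbk
    · exact absurd (hbj.trans (hbk.symm)) hjkne
    · rw [Set.mem_singleton_iff] at hbk
      rw [hbk, hbj, eb1]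
  · -- bad case : derive a contradiction
    rw [Set.mem_singleton_iff] at hbj
    exfalso
    classical
    have hbk : ρ k₁ = (a1, a2) := by
      rcases Set.mem_insert_iff.mp hkmem with hbk | hbk
      · exact hbk
      · rw [Set.mem_singleton_iff] at hbk
        exact absurd (hbj.trans hbk.symm) hjkne
    clear hjmem hkmem hpair
    -- ===== kills =====
    have hj1 : 1 ≤ j₁ := by
      by_contra hcon
      have hj0 : j₁ = 0 := by omega
      have hmn := hmin k₁ hkl
      rw [hj0] at hbj
      rw [hbj, hbk] at hmn
      simp at hmn
    have hklt : k₁ < ℓ := by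
      rcases Nat.lt_or_ge k₁ ℓ with h | h
      · exact h
      · exfalso
        have hkeq : k₁ = ℓ := by omega
        have hmx := hmax j₁ (by omega)
        rw [hbj, ← hkeq, hbk] at hmx
        simp at hmx
    have hk2 : j₁ + 2 ≤ k₁ := by
      by_contra hcon
      have hkeq : k₁ = j₁ + 1 := by omega
      have : s(ρ j₁, ρ (j₁ + 1)) ∈ wEdges ℓ ρ := ⟨j₁, by omega, rfl⟩
      rw [← hkeq, hbj, hbk] at this
      exact hE1n (by rwa [Sym2.eq_swap] at this)
    -- ===== membership in the surgered edge set =====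
    have hSmem : ∀ e : Sym2 (ℤ × ℤ), (e ∈ wEdges m ρ' ∪ wEdges m' Q) ↔
        ((e ∈ wEdges ℓ ρ ∧ e ≠ s((a1 - 1, a2), (a1, a2)) ∧
            e ≠ s((a1 - 1, a2 + 1), (a1, a2 + 1))) ∨
          e = s((a1 - 1, a2), (a1 - 1, a2 + 1)) ∨ e = s((a1, a2), (a1, a2 + 1))) := by
      intro e
      rw [← huni]
      simp only [Set.mem_union, Set.mem_diff, Set.mem_insert_iff, Set.mem_singleton_iff]
      tauto
    have hE1mem : s((a1, a2), (a1, a2 + 1)) ∈ wEdges m ρ' ∪ wEdges m' Q :=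
      (hSmem _).mpr (Or.inr (Or.inr rfl))
    have hE2mem : s((a1 - 1, a2), (a1 - 1, a2 + 1)) ∈ wEdges m ρ' ∪ wEdges m' Q :=
      (hSmem _).mpr (Or.inr (Or.inl rfl))
    have hdj : ∀ v, v ∈ wVerts m ρ' → v ∈ wVerts m' Q → False := fun v h1 h2 =>
      Set.disjoint_left.mp hdisj h1 h2
    have htr' : ∀ (q : ℤ × ℤ) (t : ℕ), q ∈ wVerts m' Q →
        q + ((t : ℤ), 0) ∈ wVerts m ρ' → False := by
      intro q t hq hv
      exact Set.disjoint_left.mp (htr t) ⟨q, hq, rfl⟩ hv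
    have hTC : (a1 - 1, a2) ∈ wVerts m' Q → (a1, a2) ∈ wVerts m ρ' → False := by
      intro hq hv
      apply htr' _ 1 hq
      have : ((a1 - 1, a2) : ℤ × ℤ) + (((1 : ℕ) : ℤ), 0) = (a1, a2) := by
        rw [Prod.mk_add_mk, Prod.mk.injEq]; omega
      rwa [this]
    have hleft : ∀ v ∈ wVerts m ρ', ∀ q ∈ wVerts m' Q, q.2 = v.2 → v.1 < q.1 := by
      intro v hv q hq hyq
      by_contra hge
      push_neg at hge
      apply htr' q (v.1 - q.1).toNat hq
      have : q + (((v.1 - q.1).toNat : ℤ), 0) = v := by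
        rw [Int.toNat_of_nonneg (by omega)]
        refine Prod.ext ?_ ?_
        · rw [Prod.fst_add]; simp
        · rw [Prod.snd_add]; simp [hyq]
      rwa [this]
    -- ===== the S*-edges at a vertex of the walk ρ =====
    have hSat : ∀ (t : ℕ), t ≤ ℓ → ∀ u : ℤ × ℤ,
        s(ρ t, u) ∈ wEdges m ρ' ∪ wEdges m' Q →
        (ρ t = (a1 - 1, a2) ∧ u = (a1 - 1, a2 + 1)) ∨
        (ρ t = (a1 - 1, a2 + 1) ∧ u = (a1 - 1, a2)) ∨
        (ρ t = (a1, a2) ∧ u = (a1, a2 + 1)) ∨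
        (ρ t = (a1, a2 + 1) ∧ u = (a1, a2)) ∨
        (((1 ≤ t ∧ u = ρ (t - 1)) ∨ (t < ℓ ∧ u = ρ (t + 1))) ∧
          s(ρ t, u) ≠ s((a1 - 1, a2), (a1, a2)) ∧
          s(ρ t, u) ≠ s((a1 - 1, a2 + 1), (a1, a2 + 1))) := by
      intro t ht u hu
      rcases (hSmem _).mp hu with ⟨he, hne1, hne2⟩ | he | he
      · exact Or.inr (Or.inr (Or.inr (Or.inr ⟨edge_inc hρ ht he, hne1, hne2⟩)))
      · rcases Sym2.eq_iff.mp he with ⟨h1, h2⟩ | ⟨h1, h2⟩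
        · exact Or.inl ⟨h1, h2⟩
        · exact Or.inr (Or.inl ⟨h1, h2⟩)
      · rcases Sym2.eq_iff.mp he with ⟨h1, h2⟩ | ⟨h1, h2⟩
        · exact Or.inr (Or.inr (Or.inl ⟨h1, h2⟩))
        · exact Or.inr (Or.inr (Or.inr (Or.inl ⟨h1, h2⟩)))
    -- ===== basic edge producers =====
    have hstepE : ∀ t, t < ℓ → s(ρ t, ρ (t + 1)) ∈ wEdges ℓ ρ := fun t ht => ⟨t, ht, rfl⟩
    have hstepE' : ∀ t, 1 ≤ t → t ≤ ℓ → s(ρ t, ρ (t - 1)) ∈ wEdges ℓ ρ := by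
      intro t h1 h2
      have h3 : s(ρ (t - 1), ρ (t - 1 + 1)) ∈ wEdges ℓ ρ := ⟨t - 1, by omega, rfl⟩
      rw [show t - 1 + 1 = t from by omega] at h3
      rwa [Sym2.eq_swap] at h3
    have hneBT : ∀ v u : ℤ × ℤ, v ≠ (a1 - 1, a2) → v ≠ (a1, a2) → v ≠ (a1 - 1, a2 + 1) →
        v ≠ (a1, a2 + 1) →
        s(v, u) ≠ s((a1 - 1, a2), (a1, a2)) ∧ s(v, u) ≠ s((a1 - 1, a2 + 1), (a1, a2 + 1)) := by
      intro v u h1 h2 h3 h4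
      constructor <;> intro he <;>
        rcases Sym2.eq_iff.mp he with ⟨hx, _⟩ | ⟨hx, _⟩ <;> tauto
    -- ===== ρ 0 and ρ ℓ are not corners =====
    have hnc0 : ρ 0 ≠ (a1, a2) ∧ ρ 0 ≠ (a1, a2 + 1) ∧ ρ 0 ≠ (a1 - 1, a2) ∧
        ρ 0 ≠ (a1 - 1, a2 + 1) := by
      refine ⟨?_, ?_, ?_, ?_⟩
      · intro h
        have := hinj 0 (by omega) k₁ (by omega) (h.trans hbk.symm); omega
      · intro h
        have := hinj 0 (by omega) j₁ (by omega) (h.trans hbj.symm); omega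
      · intro h
        have hB0 : s(ρ 0, (a1, a2)) ∈ wEdges ℓ ρ := by rw [h]; exact hB
        rcases edge_inc hρ (by omega) hB0 with ⟨h1, _⟩ | ⟨_, h2⟩
        · omega
        · have := hinj k₁ (by omega) 1 (by omega) (hbk.trans h2); omega
      · intro h
        have hmn := hmin k₁ (by omega)
        rw [h, hbk] at hmn
        have : (a2 + 1 : ℤ) ≤ a2 := by simpa using hmn
        omega
    have hncl : ρ ℓ ≠ (a1, a2) ∧ ρ ℓ ≠ (a1, a2 + 1) ∧ ρ ℓ ≠ (a1 - 1, a2) ∧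
        ρ ℓ ≠ (a1 - 1, a2 + 1) := by
      refine ⟨?_, ?_, ?_, ?_⟩
      · intro h
        have := hinj ℓ (by omega) k₁ (by omega) (h.trans hbk.symm); omega
      · intro h
        have := hinj ℓ (by omega) j₁ (by omega) (h.trans hbj.symm); omega
      · intro h
        have hmx := hmax j₁ (by omega)
        rw [hbj, h] at hmx
        have : (a2 + 1 : ℤ) ≤ a2 := by simpa using hmx
        omega
      · intro h
        have hTl : s(ρ ℓ, (a1, a2 + 1)) ∈ wEdges ℓ ρ := by rw [h]; exact hT
        rcases edge_inc hρ (by omega) hTl with ⟨h1, h2⟩ | ⟨h1, _⟩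
        · have := hinj j₁ (by omega) (ℓ - 1) (by omega) (hbj.trans h2); omega
        · omega
    -- ===== the polygon has length at least 3 =====
    have hm2 : 2 ≤ m' := by
      rcases Nat.lt_or_ge m' 2 with h | h
      · exfalso
        have hm0' := hQp.1
        have hm1 : m' = 1 := by omega
        have hst := hQp.2.1 0 (by omega)
        have hcl := hQp.2.2.1
        rw [hm1] at hcl
        rw [hcl] at hst
        unfold IsStep at hst
        simp at hst
      · exact h
    have hm3 : 3 ≤ m' := by
      rcases Nat.lt_or_ge m' 3 with h | h
      swap
      · exact h
      exfalso
      have hm'2 : m' = 2 := by omega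
      have hQ01 : Q 0 ≠ Q 1 := by
        intro hq
        have := hQp.2.2.2 0 (by omega) 1 (by omega) hq
        omega
      have hEQ2 : ∀ e ∈ wEdges m' Q, e = s(Q 0, Q 1) := by
        intro e he
        obtain ⟨i, hi, hei⟩ := he
        have : i = 0 ∨ i = 1 := by omega
        rcases this with h0 | h0
        · rw [h0] at hei; exact hei
        · rw [h0] at hei
          have hcl := hQp.2.2.1
          rw [hm'2] at hcl
          rw [show (1 : ℕ) + 1 = 2 from rfl, hcl] at hei
          rw [hei]
          exact Sym2.eq_swap
      have hQ01E : s(Q 0, Q 1) ∈ wEdges m' Q := ⟨0, by omega, rfl⟩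
      rcases (hSmem _).mp (Or.inr hQ01E) with ⟨heρ, hne1, hne2⟩ | he | he
      · -- the unique Q-edge is an edge of ρ : long chase
        have hE1ρ' : s((a1, a2), (a1, a2 + 1)) ∈ wEdges m ρ' := by
          rcases hE1mem with h' | h'
          · exact h'
          · exfalso
            have := hEQ2 _ h'
            rw [this] at hE1n
            exact hE1n heρ
        have hE2ρ' : s((a1 - 1, a2), (a1 - 1, a2 + 1)) ∈ wEdges m ρ' := by
          rcases hE2mem with h' | h'
          · exact h'
          · exfalso
            have := hEQ2 _ h'
            rw [this] at hE2n
            exact hE2n heρ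
        have hvA : (a1, a2) ∈ wVerts m ρ' := (edge_verts hE1ρ').1
        have hvB : (a1, a2 + 1) ∈ wVerts m ρ' := (edge_verts hE1ρ').2
        have hvC : (a1 - 1, a2) ∈ wVerts m ρ' := (edge_verts hE2ρ').1
        have hvD : (a1 - 1, a2 + 1) ∈ wVerts m ρ' := (edge_verts hE2ρ').2
        have hQ0Q : Q 0 ∈ wVerts m' Q := ⟨0, by omega, rfl⟩
        have hQ1Q : Q 1 ∈ wVerts m' Q := ⟨1, by omega, rfl⟩
        have hQ0nc : Q 0 ≠ (a1, a2) ∧ Q 0 ≠ (a1, a2 + 1) ∧ Q 0 ≠ (a1 - 1, a2) ∧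
            Q 0 ≠ (a1 - 1, a2 + 1) := by
          refine ⟨fun h => ?_, fun h => ?_, fun h => ?_, fun h => ?_⟩ <;>
            · rw [h] at hQ0Q
              first
                | exact hdj _ hvA hQ0Q
                | exact hdj _ hvB hQ0Q
                | exact hdj _ hvC hQ0Q
                | exact hdj _ hvD hQ0Q
        have hQ1nc : Q 1 ≠ (a1, a2) ∧ Q 1 ≠ (a1, a2 + 1) ∧ Q 1 ≠ (a1 - 1, a2) ∧
            Q 1 ≠ (a1 - 1, a2 + 1) := by
          refine ⟨fun h => ?_, fun h => ?_, fun h => ?_, fun h => ?_⟩ <;>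
            · rw [h] at hQ1Q
              first
                | exact hdj _ hvA hQ1Q
                | exact hdj _ hvB hQ1Q
                | exact hdj _ hvC hQ1Q
                | exact hdj _ hvD hQ1Q
        obtain ⟨t, ht, hQ0⟩ := (edge_verts heρ).1
        -- a helper : any ρ-step at a vertex of {Q0, Q1} lands in trouble unless it is the Q-edge
        have hkey : ∀ s', s' ≤ ℓ → (ρ s' = Q 0 ∨ ρ s' = Q 1) →
            ∀ u, s(ρ s', u) ∈ wEdges ℓ ρ → s(ρ s', u) = s(Q 0, Q 1) := by
          intro s' hs' hqs u hu
          have hsnc := hqs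
          have hne1 : s(ρ s', u) ≠ s((a1 - 1, a2), (a1, a2)) := by
            rcases hqs with h | h <;> rw [h] <;>
              exact (hneBT _ _ (by tauto) (by tauto) (by tauto) (by tauto)).1
          have hne2 : s(ρ s', u) ≠ s((a1 - 1, a2 + 1), (a1, a2 + 1)) := by
            rcases hqs with h | h <;> rw [h] <;>
              exact (hneBT _ _ (by tauto) (by tauto) (by tauto) (by tauto)).2
          have hmem : s(ρ s', u) ∈ wEdges m ρ' ∪ wEdges m' Q :=
            (hSmem _).mpr (Or.inl ⟨hu, hne1, hne2⟩)
          rcases hmem with he' | he'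
          · exfalso
            have : ρ s' ∈ wVerts m ρ' := (edge_verts he').1
            rcases hqs with h | h <;> rw [h] at this
            · exact hdj _ this hQ0Q
            · exact hdj _ this hQ1Q
          · exact hEQ2 _ he'
        -- now analyse the position t of Q 0 on ρ
        have hQ1idx : ∀ s', s' ≤ ℓ → ρ s' = Q 0 →
            ((1 ≤ s' → ρ (s' - 1) = Q 1) ∧ (s' < ℓ → ρ (s' + 1) = Q 1)) := by
          intro s' hs' hq
          constructor
          · intro h1
            have := hkey s' hs' (Or.inl hq) _ (hstepE' s' h1 hs')
            rcases Sym2.eq_iff.mp this with ⟨hx, hy⟩ | ⟨hx, hy⟩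
            · exact hy
            · exfalso; exact hQ01 (hq ▸ hx ▸ rfl : Q 0 = Q 1)
          · intro h1
            have := hkey s' hs' (Or.inl hq) _ (hstepE s' h1)
            rcases Sym2.eq_iff.mp this with ⟨hx, hy⟩ | ⟨hx, hy⟩
            · exact hy
            · exfalso; exact hQ01 (hq ▸ hx ▸ rfl : Q 0 = Q 1)
        rcases Nat.eq_zero_or_pos t with ht0 | htpos
        · -- t = 0 : then ρ 1 = Q 1 and chase at index 1
          subst ht0
          have hρ1 : ρ 1 = Q 1 := (hQ1idx 0 (by omega) hQ0).2 (by omega)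
          have := hkey 1 (by omega) (Or.inr hρ1) _ (hstepE 1 (by omega))
          rcases Sym2.eq_iff.mp this with ⟨hx, hy⟩ | ⟨hx, hy⟩
          · exact hQ01 ((hρ1 ▸ hx ▸ rfl : Q 1 = Q 0)).symm
          · have : (2 : ℕ) = 0 := hinj 2 (by omega) 0 (by omega) (hy.trans hQ0.symm)
            omega
        · rcases Nat.lt_or_ge t ℓ with htl | htl
          · -- 0 < t < ℓ : both neighbours are Q 1
            have h1 := (hQ1idx t (by omega) hQ0).1 (by omega)
            have h2 := (hQ1idx t (by omega) hQ0).2 htl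
            have : t - 1 = t + 1 := hinj (t - 1) (by omega) (t + 1) (by omega) (h1.trans h2.symm)
            omega
          · -- t = ℓ
            have htℓ : t = ℓ := by omega
            subst htℓ
            have hρl1 : ρ (t - 1) = Q 1 := (hQ1idx t (by omega) hQ0).1 (by omega)
            have := hkey (t - 1) (by omega) (Or.inr hρl1) _ (hstepE' (t - 1) (by omega) (by omega))
            rcases Sym2.eq_iff.mp this with ⟨hx, hy⟩ | ⟨hx, hy⟩
            · exact hQ01 ((hρl1 ▸ hx ▸ rfl : Q 1 = Q 0)).symm
            · have : t - 1 - 1 = t := hinj (t - 1 - 1) (by omega) t (by omega) (hy.trans hQ0.symm)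
              omega
      · -- the unique Q-edge is E2 : translate contradiction
        have hvCq : (a1 - 1, a2) ∈ wVerts m' Q := by
          rcases Sym2.eq_iff.mp he with ⟨h1, _⟩ | ⟨_, h2⟩
          · exact ⟨0, by omega, h1⟩
          · exact ⟨1, by omega, h2⟩
        have hvAρ : (a1, a2) ∈ wVerts m ρ' := by
          rcases hE1mem with h' | h'
          · exact (edge_verts h').1
          · exfalso
            have h'' := hEQ2 _ h'
            rw [he] at h''
            rcases Sym2.eq_iff.mp h'' with ⟨hx, _⟩ | ⟨hx, _⟩ <;>
              · have := pair_eq hx; omega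
        exact hTC hvCq hvAρ
      · -- the unique Q-edge is E1 : chase the second ρ-edge at (a1, a2+1)
        have hvBq : (a1, a2 + 1) ∈ wVerts m' Q := by
          rcases Sym2.eq_iff.mp he with ⟨_, h2⟩ | ⟨h1, _⟩
          · exact ⟨1, by omega, h2⟩
          · exact ⟨0, by omega, h1⟩
        have hTj : s(ρ j₁, (a1 - 1, a2 + 1)) ∈ wEdges ℓ ρ := by
          rw [hbj]
          rwa [Sym2.eq_swap] at hT
        have hkeyB : ∀ u, s(ρ j₁, u) ∈ wEdges ℓ ρ → u ≠ (a1 - 1, a2 + 1) → False := by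
          intro u hu hune
          have hne1 : s(ρ j₁, u) ≠ s((a1 - 1, a2), (a1, a2)) := by
            intro hcon
            rcases Sym2.eq_iff.mp hcon with ⟨hx, _⟩ | ⟨hx, _⟩ <;>
              · rw [hbj] at hx; have := pair_eq hx; omega
          have hne2 : s(ρ j₁, u) ≠ s((a1 - 1, a2 + 1), (a1, a2 + 1)) := by
            intro hcon
            rcases Sym2.eq_iff.mp hcon with ⟨hx, _⟩ | ⟨_, hy⟩
            · rw [hbj] at hx; have := pair_eq hx; omega
            · exact hune hy
          have hmem : s(ρ j₁, u) ∈ wEdges m ρ' ∪ wEdges m' Q :=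
            (hSmem _).mpr (Or.inl ⟨hu, hne1, hne2⟩)
          rcases hmem with he' | he'
          · have : ρ j₁ ∈ wVerts m ρ' := (edge_verts he').1
            rw [hbj] at this
            exact hdj _ this hvBq
          · have h'' := hEQ2 _ he'
            rw [he] at h''
            rw [h''] at hu
            exact hE1n hu
        rcases edge_inc hρ (by omega) hTj with ⟨h1, h2⟩ | ⟨h1, h2⟩
        · -- c1 = ρ (j₁ - 1) : use the edge towards ρ (j₁ + 1)
          apply hkeyB _ (hstepE j₁ (by omega))
          intro hcon
          have : j₁ + 1 = j₁ - 1 := hinj (j₁ + 1) (by omega) (j₁ - 1) (by omega) (hcon.trans h2)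
          omega
        · -- c1 = ρ (j₁ + 1) : use the edge towards ρ (j₁ - 1)
          apply hkeyB _ (hstepE' j₁ (by omega) (by omega))
          intro hcon
          have : j₁ - 1 = j₁ + 1 := hinj (j₁ - 1) (by omega) (j₁ + 1) (by omega) (hcon.trans h2)
          omega
    -- ===== every Q-vertex has two distinct Q-edges =====
    have hQ2E := fun {v} (hv : v ∈ wVerts m' Q) => polygon_two_edges hQp hm3 hv
    -- ===== ρ 0 and ρ ℓ belong to ρ' =====
    have h0ρ' : ρ 0 ∈ wVerts m ρ' := by
      have hne12 := hneBT (ρ 0) (ρ 1) hnc0.2.2.1 hnc0.1 hnc0.2.2.2 hnc0.2.1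
      have hs0 : s(ρ 0, ρ 1) ∈ wEdges m ρ' ∪ wEdges m' Q :=
        (hSmem _).mpr (Or.inl ⟨⟨0, by omega, rfl⟩, hne12.1, hne12.2⟩)
      rcases hs0 with he | he
      · exact (edge_verts he).1
      · exfalso
        have h0Q : ρ 0 ∈ wVerts m' Q := (edge_verts he).1
        obtain ⟨u1, u2, hne, he1, he2⟩ := hQ2E h0Q
        have hu : ∀ u, s(ρ 0, u) ∈ wEdges m' Q → u = ρ 1 := by
          intro u hu'
          rcases hSat 0 (by omega) u (Or.inr hu') with ⟨h, _⟩ | ⟨h, _⟩ | ⟨h, _⟩ | ⟨h, _⟩ |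
            ⟨hca, _, _⟩
          · exact absurd h hnc0.2.2.1
          · exact absurd h hnc0.2.2.2
          · exact absurd h hnc0.1
          · exact absurd h hnc0.2.1
          · rcases hca with ⟨hx, _⟩ | ⟨_, hx⟩
            · omega
            · exact hx
        exact hne ((hu u1 he1).trans (hu u2 he2).symm)
    have hlρ' : ρ ℓ ∈ wVerts m ρ' := by
      have hne12 := hneBT (ρ ℓ) (ρ (ℓ - 1)) hncl.2.2.1 hncl.1 hncl.2.2.2 hncl.2.1
      have hs0 : s(ρ ℓ, ρ (ℓ - 1)) ∈ wEdges m ρ' ∪ wEdges m' Q :=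
        (hSmem _).mpr (Or.inl ⟨hstepE' ℓ (by omega) (by omega), hne12.1, hne12.2⟩)
      rcases hs0 with he | he
      · exact (edge_verts he).1
      · exfalso
        have hlQ : ρ ℓ ∈ wVerts m' Q := (edge_verts he).1
        obtain ⟨u1, u2, hne, he1, he2⟩ := hQ2E hlQ
        have hu : ∀ u, s(ρ ℓ, u) ∈ wEdges m' Q → u = ρ (ℓ - 1) := by
          intro u hu'
          rcases hSat ℓ (by omega) u (Or.inr hu') with ⟨h, _⟩ | ⟨h, _⟩ | ⟨h, _⟩ | ⟨h, _⟩ |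
            ⟨hca, _, _⟩
          · exact absurd h hncl.2.2.1
          · exact absurd h hncl.2.2.2
          · exact absurd h hncl.1
          · exact absurd h hncl.2.1
          · rcases hca with ⟨_, hx⟩ | ⟨hx, _⟩
            · exact hx
            · omega
        exact hne ((hu u1 he1).trans (hu u2 he2).symm)
    -- ===== Claim 1a : the pair {(a1,a2),(a1,a2+1)} lies in Q =====
    have h1a : ((a1, a2) ∈ wVerts m' Q ∧ (a1, a2 + 1) ∈ wVerts m' Q) ∧
        s((a1, a2), (a1, a2 + 1)) ∈ wEdges m' Q := by
      rcases hE1mem with he | he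
      swap
      · exact ⟨⟨(edge_verts he).1, (edge_verts he).2⟩, he⟩
      exfalso
      have hvA : (a1, a2) ∈ wVerts m ρ' := (edge_verts he).1
      have hvB : (a1, a2 + 1) ∈ wVerts m ρ' := (edge_verts he).2
      rcases hE2mem with he2 | he2
      · -- both added edges are in ρ' : Q would be a cycle inside the path ρ
        have hvC : (a1 - 1, a2) ∈ wVerts m ρ' := (edge_verts he2).1
        have hvD : (a1 - 1, a2 + 1) ∈ wVerts m ρ' := (edge_verts he2).2
        have hQρ : ∀ e ∈ wEdges m' Q, e ∈ wEdges ℓ ρ := by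
          intro e heq
          rcases (hSmem e).mp (Or.inr heq) with ⟨h, _, _⟩ | h | h
          · exact h
          · exfalso
            subst h
            exact hdj _ hvC ((edge_verts heq).1)
          · exfalso
            subst h
            exact hdj _ hvA ((edge_verts heq).1)
        have hVQρ : ∀ v ∈ wVerts m' Q, v ∈ wVerts ℓ ρ := by
          intro v hv
          obtain ⟨u1, u2, hne, he1, he2⟩ := hQ2E hv
          exact (edge_verts (hQρ _ he1)).1
        have hQ0V : Q 0 ∈ wVerts m' Q := ⟨0, by omega, rfl⟩
        obtain ⟨t0, ht0, hq0⟩ := hVQρ _ hQ0V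
        have hInonempty : ((Finset.range (ℓ + 1)).filter
            (fun i => ρ i ∈ wVerts m' Q)).Nonempty := by
          refine ⟨t0, Finset.mem_filter.mpr ⟨Finset.mem_range.mpr (by omega), ?_⟩⟩
          rw [hq0]; exact hQ0V
        set tm := ((Finset.range (ℓ + 1)).filter (fun i => ρ i ∈ wVerts m' Q)).max'
          hInonempty with htm
        have htmem := Finset.max'_mem _ hInonempty
        rw [← htm, Finset.mem_filter, Finset.mem_range] at htmem
        obtain ⟨u1, u2, hne, he1, he2⟩ := hQ2E htmem.2
        have hmaxc : ∀ u, s(ρ tm, u) ∈ wEdges m' Q → (1 ≤ tm ∧ u = ρ (tm - 1)) := by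
          intro u hu
          have hue : u ∈ wVerts m' Q := (edge_verts hu).2
          rcases edge_inc hρ (by omega) (hQρ _ hu) with ⟨h1, h2⟩ | ⟨h1, h2⟩
          · exact ⟨h1, h2⟩
          · exfalso
            have hmem : tm + 1 ∈ (Finset.range (ℓ + 1)).filter
                (fun i => ρ i ∈ wVerts m' Q) := by
              refine Finset.mem_filter.mpr ⟨Finset.mem_range.mpr (by omega), ?_⟩
              rw [← h2]; exact hue
            have := Finset.le_max' _ _ hmem
            rw [← htm] at this
            omega
        have e1 := hmaxc u1 he1
        have e2 := hmaxc u2 he2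
        exact hne (e1.2.trans e2.2.symm)
      · -- the added vertical pair lies in Q : translate contradiction
        exact hTC ((edge_verts he2).1) hvA
    have hvAQ : (a1, a2) ∈ wVerts m' Q := h1a.1.1
    have hvBQ : (a1, a2 + 1) ∈ wVerts m' Q := h1a.1.2
    -- ===== Claim 1b : the pair {(a1-1,a2),(a1-1,a2+1)} lies in ρ' =====
    have h1b : (a1 - 1, a2) ∈ wVerts m ρ' ∧ (a1 - 1, a2 + 1) ∈ wVerts m ρ' := by
      rcases hE2mem with he2 | he2
      · exact ⟨(edge_verts he2).1, (edge_verts he2).2⟩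
      exfalso
      have hvCq : (a1 - 1, a2) ∈ wVerts m' Q := (edge_verts he2).1
      have hvDq : (a1 - 1, a2 + 1) ∈ wVerts m' Q := (edge_verts he2).2
      have hCIne : (((Finset.range (ℓ + 1)).filter (fun i => ρ i = (a1, a2) ∨
          ρ i = (a1, a2 + 1) ∨ ρ i = (a1 - 1, a2) ∨ ρ i = (a1 - 1, a2 + 1)))).Nonempty :=
        ⟨j₁, Finset.mem_filter.mpr ⟨Finset.mem_range.mpr (by omega), Or.inr (Or.inl hbj)⟩⟩
      set i0 := (((Finset.range (ℓ + 1)).filter (fun i => ρ i = (a1, a2) ∨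
          ρ i = (a1, a2 + 1) ∨ ρ i = (a1 - 1, a2) ∨ ρ i = (a1 - 1, a2 + 1)))).min'
        hCIne with hi0
      have hi0mem := Finset.min'_mem _ hCIne
      rw [← hi0, Finset.mem_filter, Finset.mem_range] at hi0mem
      have hi0le : i0 ≤ j₁ := by
        have hmemj : j₁ ∈ (Finset.range (ℓ + 1)).filter (fun i => ρ i = (a1, a2) ∨
            ρ i = (a1, a2 + 1) ∨ ρ i = (a1 - 1, a2) ∨ ρ i = (a1 - 1, a2 + 1)) :=
          Finset.mem_filter.mpr ⟨Finset.mem_range.mpr (by omega), Or.inr (Or.inl hbj)⟩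
        have := Finset.min'_le _ j₁ hmemj
        rw [← hi0] at this
        exact this
      have hi0pos : 1 ≤ i0 := by
        rcases Nat.eq_zero_or_pos i0 with h | h
        · exfalso
          rw [h] at hi0mem
          rcases hi0mem.2 with hc | hc | hc | hc
          · exact hnc0.1 hc
          · exact hnc0.2.1 hc
          · exact hnc0.2.2.1 hc
          · exact hnc0.2.2.2 hc
        · exact h
      have hncbelow : ∀ i < i0, ¬(ρ i = (a1, a2) ∨ ρ i = (a1, a2 + 1) ∨
          ρ i = (a1 - 1, a2) ∨ ρ i = (a1 - 1, a2 + 1)) := by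
        intro i hi hcor
        have hmemi : i ∈ (Finset.range (ℓ + 1)).filter (fun i => ρ i = (a1, a2) ∨
            ρ i = (a1, a2 + 1) ∨ ρ i = (a1 - 1, a2) ∨ ρ i = (a1 - 1, a2 + 1)) :=
          Finset.mem_filter.mpr ⟨Finset.mem_range.mpr (by omega), hcor⟩
        have := Finset.min'_le _ i hmemi
        rw [← hi0] at this
        omega
      have hpropd : ∀ i ≤ i0, ρ i ∈ wVerts m ρ' := by
        intro i
        induction i with
        | zero => exact fun _ => h0ρ'
        | succ n ih =>
          intro hn
          have hnlt : n < i0 := by omega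
          have hnV := ih (by omega)
          have hncn := hncbelow n hnlt
          push_neg at hncn
          have hne12 := hneBT (ρ n) (ρ (n + 1)) hncn.2.2.1 hncn.1 hncn.2.2.2 hncn.2.1
          have hstepn : s(ρ n, ρ (n + 1)) ∈ wEdges m ρ' ∪ wEdges m' Q :=
            (hSmem _).mpr (Or.inl ⟨⟨n, by omega, rfl⟩, hne12.1, hne12.2⟩)
          rcases hstepn with he | he
          · exact (edge_verts he).2
          · exact absurd ((edge_verts he).1) (fun hq => hdj _ hnV hq)
      have hi0V := hpropd i0 (le_refl _)
      rcases hi0mem.2 with hc | hc | hc | hc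
      · exact hdj _ hi0V (show ρ i0 ∈ wVerts m' Q by rw [hc]; exact hvAQ)
      · exact hdj _ hi0V (show ρ i0 ∈ wVerts m' Q by rw [hc]; exact hvBQ)
      · exact hdj _ hi0V (show ρ i0 ∈ wVerts m' Q by rw [hc]; exact hvCq)
      · exact hdj _ hi0V (show ρ i0 ∈ wVerts m' Q by rw [hc]; exact hvDq)
    have hvCρ : (a1 - 1, a2) ∈ wVerts m ρ' := h1b.1
    have hvDρ : (a1 - 1, a2 + 1) ∈ wVerts m ρ' := h1b.2
    -- ===== Claim 3a : ρ (j₁ - 1) = (a1 - 1, a2 + 1) =====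
    have hTj : s(ρ j₁, (a1 - 1, a2 + 1)) ∈ wEdges ℓ ρ := by
      rw [hbj]; rwa [Sym2.eq_swap] at hT
    have hBk : s(ρ k₁, (a1 - 1, a2)) ∈ wEdges ℓ ρ := by
      rw [hbk]; rwa [Sym2.eq_swap] at hB
    have hc1j : ρ (j₁ - 1) = (a1 - 1, a2 + 1) := by
      rcases edge_inc hρ (by omega) hTj with ⟨h1, h2⟩ | ⟨h1, h2⟩
      · exact h2.symm
      exfalso
      obtain ⟨u1, u2, hne, he1, he2⟩ := hQ2E hvBQ
      have hu : ∀ u, s((a1, a2 + 1), u) ∈ wEdges m' Q →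
          u = (a1, a2) ∨ (u = ρ (j₁ - 1) ∧ ρ (j₁ - 1) ∈ wVerts m' Q) := by
        intro u hu'
        have hu'' : s(ρ j₁, u) ∈ wEdges m ρ' ∪ wEdges m' Q := by
          rw [hbj]; exact Or.inr hu'
        have huQ : u ∈ wVerts m' Q := (edge_verts hu').2
        rcases hSat j₁ (by omega) u hu'' with ⟨h, _⟩ | ⟨h, _⟩ | ⟨h, _⟩ | ⟨_, hx⟩ |
          ⟨hca, hb', ht'⟩
        · rw [hbj] at h; exact absurd (pair_eq h) (by omega)
        · rw [hbj] at h; exact absurd (pair_eq h) (by omega)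
        · rw [hbj] at h; exact absurd (pair_eq h) (by omega)
        · exact Or.inl hx
        · rcases hca with ⟨hx1, hx2⟩ | ⟨hx1, hx2⟩
          · exact Or.inr ⟨hx2, by rw [← hx2]; exact huQ⟩
          · exfalso
            apply ht'
            rw [hx2, ← h2, hbj]
            exact Sym2.eq_swap
      have hjQ : ρ (j₁ - 1) ∈ wVerts m' Q := by
        rcases hu u1 he1 with h | h
        · rcases hu u2 he2 with h' | h'
          · exact absurd (h.trans h'.symm) hne
          · exact h'.2
        · exact h.2
      have hpropq : ∀ d, d ≤ j₁ - 1 → ρ (j₁ - 1 - d) ∈ wVerts m' Q := by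
        intro d
        induction d with
        | zero => intro _; rw [Nat.sub_zero]; exact hjQ
        | succ n ih =>
          intro hd
          have hiQ := ih (by omega)
          have hipos : 1 ≤ j₁ - 1 - n := by omega
          have hnc1 : ρ (j₁ - 1 - n) ≠ (a1, a2) := fun h => by
            have := hinj (j₁ - 1 - n) (by omega) k₁ (by omega) (h.trans hbk.symm); omega
          have hnc2 : ρ (j₁ - 1 - n) ≠ (a1, a2 + 1) := fun h => by
            have := hinj (j₁ - 1 - n) (by omega) j₁ (by omega) (h.trans hbj.symm); omega
          have hnc4 : ρ (j₁ - 1 - n) ≠ (a1 - 1, a2 + 1) := fun h => by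
            have := hinj (j₁ - 1 - n) (by omega) (j₁ + 1) (by omega) (h.trans h2); omega
          have hnc3 : ρ (j₁ - 1 - n) ≠ (a1 - 1, a2) := fun h => by
            rcases edge_inc hρ (by omega) hBk with ⟨hx1, hx2⟩ | ⟨hx1, hx2⟩
            · have := hinj (j₁ - 1 - n) (by omega) (k₁ - 1) (by omega) (h.trans hx2); omega
            · have := hinj (j₁ - 1 - n) (by omega) (k₁ + 1) (by omega) (h.trans hx2); omega
          have hne12 := hneBT (ρ (j₁ - 1 - n)) (ρ (j₁ - 1 - n - 1)) hnc3 hnc1 hnc4 hnc2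
          have hstepi : s(ρ (j₁ - 1 - n), ρ (j₁ - 1 - n - 1)) ∈ wEdges m ρ' ∪ wEdges m' Q :=
            (hSmem _).mpr (Or.inl ⟨hstepE' (j₁ - 1 - n) hipos (by omega), hne12.1, hne12.2⟩)
          rcases hstepi with he | he
          · exact absurd hiQ (fun hq => hdj _ ((edge_verts he).1) hq)
          · have hres : ρ (j₁ - 1 - n - 1) ∈ wVerts m' Q := (edge_verts he).2
            rw [show j₁ - 1 - (n + 1) = j₁ - 1 - n - 1 from by omega]
            exact hres
      have hfin := hpropq (j₁ - 1) (le_refl _)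
      rw [show j₁ - 1 - (j₁ - 1) = 0 from by omega] at hfin
      exact hdj _ h0ρ' hfin
    -- ===== Claim 3b : ρ (k₁ + 1) = (a1 - 1, a2) =====
    have hc0k : ρ (k₁ + 1) = (a1 - 1, a2) := by
      rcases edge_inc hρ (by omega) hBk with ⟨h1, h2⟩ | ⟨h1, h2⟩
      swap
      · exact h2.symm
      exfalso
      obtain ⟨u1, u2, hne, he1, he2⟩ := hQ2E hvAQ
      have hu : ∀ u, s((a1, a2), u) ∈ wEdges m' Q →
          u = (a1, a2 + 1) ∨ (u = ρ (k₁ + 1) ∧ ρ (k₁ + 1) ∈ wVerts m' Q) := by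
        intro u hu'
        have hu'' : s(ρ k₁, u) ∈ wEdges m ρ' ∪ wEdges m' Q := by
          rw [hbk]; exact Or.inr hu'
        have huQ : u ∈ wVerts m' Q := (edge_verts hu').2
        rcases hSat k₁ (by omega) u hu'' with ⟨h, _⟩ | ⟨h, _⟩ | ⟨_, hx⟩ | ⟨h, _⟩ |
          ⟨hca, hb', ht'⟩
        · rw [hbk] at h; exact absurd (pair_eq h) (by omega)
        · rw [hbk] at h; exact absurd (pair_eq h) (by omega)
        · exact Or.inl hx
        · rw [hbk] at h; exact absurd (pair_eq h) (by omega)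
        · rcases hca with ⟨hx1, hx2⟩ | ⟨hx1, hx2⟩
          · exfalso
            apply hb'
            rw [hx2, ← h2, hbk]
            exact Sym2.eq_swap
          · exact Or.inr ⟨hx2, by rw [← hx2]; exact huQ⟩
      have hkQ : ρ (k₁ + 1) ∈ wVerts m' Q := by
        rcases hu u1 he1 with h | h
        · rcases hu u2 he2 with h' | h'
          · exact absurd (h.trans h'.symm) hne
          · exact h'.2
        · exact h.2
      have hpropq : ∀ d, k₁ + 1 + d ≤ ℓ → ρ (k₁ + 1 + d) ∈ wVerts m' Q := by
        intro d
        induction d with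
        | zero => intro _; exact hkQ
        | succ n ih =>
          intro hd
          have hiQ := ih (by omega)
          have hnc1 : ρ (k₁ + 1 + n) ≠ (a1, a2) := fun h => by
            have := hinj (k₁ + 1 + n) (by omega) k₁ (by omega) (h.trans hbk.symm); omega
          have hnc2 : ρ (k₁ + 1 + n) ≠ (a1, a2 + 1) := fun h => by
            have := hinj (k₁ + 1 + n) (by omega) j₁ (by omega) (h.trans hbj.symm); omega
          have hnc4 : ρ (k₁ + 1 + n) ≠ (a1 - 1, a2 + 1) := fun h => by
            have := hinj (k₁ + 1 + n) (by omega) (j₁ - 1) (by omega) (h.trans hc1j.symm); omega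
          have hnc3 : ρ (k₁ + 1 + n) ≠ (a1 - 1, a2) := fun h => by
            have := hinj (k₁ + 1 + n) (by omega) (k₁ - 1) (by omega) (h.trans h2); omega
          have hne12 := hneBT (ρ (k₁ + 1 + n)) (ρ (k₁ + 1 + n + 1)) hnc3 hnc1 hnc4 hnc2
          have hstepi : s(ρ (k₁ + 1 + n), ρ (k₁ + 1 + n + 1)) ∈ wEdges m ρ' ∪ wEdges m' Q :=
            (hSmem _).mpr (Or.inl ⟨⟨k₁ + 1 + n, by omega, rfl⟩, hne12.1, hne12.2⟩)
          rcases hstepi with he | he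
          · exact absurd hiQ (fun hq => hdj _ ((edge_verts he).1) hq)
          · have hres : ρ (k₁ + 1 + n + 1) ∈ wVerts m' Q := (edge_verts he).2
            rw [show k₁ + 1 + (n + 1) = k₁ + 1 + n + 1 from by omega]
            exact hres
      have hfin := hpropq (ℓ - (k₁ + 1)) (by omega)
      rw [show k₁ + 1 + (ℓ - (k₁ + 1)) = ℓ from by omega] at hfin
      exact hdj _ hlρ' hfin
    -- ===== bounds forced by the corner identifications =====
    have hj2 : 2 ≤ j₁ := by
      by_contra hcon
      have : j₁ - 1 = 0 := by omega
      rw [this] at hc1j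
      exact hnc0.2.2.2 hc1j
    have hkl2 : k₁ + 2 ≤ ℓ := by
      by_contra hcon
      have : k₁ + 1 = ℓ := by omega
      rw [this] at hc0k
      exact hncl.2.2.1 hc0k
    -- ===== Step 4 : the two ρ-segments lie in ρ' =====
    have hpart1' : ∀ d, d ≤ j₁ - 1 → ρ (j₁ - 1 - d) ∈ wVerts m ρ' := by
      intro d
      induction d with
      | zero => intro _; rw [Nat.sub_zero, hc1j]; exact hvDρ
      | succ n ih =>
        intro hd
        have hprev := ih (by omega)
        have hipos : 1 ≤ j₁ - 1 - n := by omega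
        have hneB : s(ρ (j₁ - 1 - n), ρ (j₁ - 1 - n - 1)) ≠ s((a1 - 1, a2), (a1, a2)) := by
          intro hcon
          rcases Sym2.eq_iff.mp hcon with ⟨hx, hy⟩ | ⟨hx, hy⟩
          · have := hinj (j₁ - 1 - n) (by omega) (k₁ + 1) (by omega) (hx.trans hc0k.symm); omega
          · have := hinj (j₁ - 1 - n) (by omega) k₁ (by omega) (hx.trans hbk.symm); omega
        have hneT : s(ρ (j₁ - 1 - n), ρ (j₁ - 1 - n - 1)) ≠
            s((a1 - 1, a2 + 1), (a1, a2 + 1)) := by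
          intro hcon
          rcases Sym2.eq_iff.mp hcon with ⟨hx, hy⟩ | ⟨hx, hy⟩
          · have := hinj (j₁ - 1 - n - 1) (by omega) j₁ (by omega) (hy.trans hbj.symm); omega
          · have := hinj (j₁ - 1 - n) (by omega) j₁ (by omega) (hx.trans hbj.symm); omega
        have hstepi : s(ρ (j₁ - 1 - n), ρ (j₁ - 1 - n - 1)) ∈ wEdges m ρ' ∪ wEdges m' Q :=
          (hSmem _).mpr (Or.inl ⟨hstepE' (j₁ - 1 - n) hipos (by omega), hneB, hneT⟩)
        rcases hstepi with he | he
        · have hres : ρ (j₁ - 1 - n - 1) ∈ wVerts m ρ' := (edge_verts he).2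
          rw [show j₁ - 1 - (n + 1) = j₁ - 1 - n - 1 from by omega]
          exact hres
        · exact absurd ((edge_verts he).1) (fun hq => hdj _ hprev hq)
    have hpart1 : ∀ i ≤ j₁ - 1, ρ i ∈ wVerts m ρ' := by
      intro i hi
      have := hpart1' (j₁ - 1 - i) (by omega)
      rw [show j₁ - 1 - (j₁ - 1 - i) = i from by omega] at this
      exact this
    have hpart2' : ∀ d, k₁ + 1 + d ≤ ℓ → ρ (k₁ + 1 + d) ∈ wVerts m ρ' := by
      intro d
      induction d with
      | zero => intro _; rw [hc0k]; exact hvCρ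
      | succ n ih =>
        intro hd
        have hprev := ih (by omega)
        have hneB : s(ρ (k₁ + 1 + n), ρ (k₁ + 1 + n + 1)) ≠ s((a1 - 1, a2), (a1, a2)) := by
          intro hcon
          rcases Sym2.eq_iff.mp hcon with ⟨hx, hy⟩ | ⟨hx, hy⟩
          · have := hinj (k₁ + 1 + n + 1) (by omega) k₁ (by omega) (hy.trans hbk.symm); omega
          · have := hinj (k₁ + 1 + n) (by omega) k₁ (by omega) (hx.trans hbk.symm); omega
        have hneT : s(ρ (k₁ + 1 + n), ρ (k₁ + 1 + n + 1)) ≠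
            s((a1 - 1, a2 + 1), (a1, a2 + 1)) := by
          intro hcon
          rcases Sym2.eq_iff.mp hcon with ⟨hx, hy⟩ | ⟨hx, hy⟩
          · have := hinj (k₁ + 1 + n) (by omega) (j₁ - 1) (by omega) (hx.trans hc1j.symm); omega
          · have := hinj (k₁ + 1 + n) (by omega) j₁ (by omega) (hx.trans hbj.symm); omega
        have hstepi : s(ρ (k₁ + 1 + n), ρ (k₁ + 1 + n + 1)) ∈ wEdges m ρ' ∪ wEdges m' Q :=
          (hSmem _).mpr (Or.inl ⟨⟨k₁ + 1 + n, by omega, rfl⟩, hneB, hneT⟩)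
        rcases hstepi with he | he
        · have hres : ρ (k₁ + 1 + n + 1) ∈ wVerts m ρ' := (edge_verts he).2
          rw [show k₁ + 1 + (n + 1) = k₁ + 1 + n + 1 from by omega]
          exact hres
        · exact absurd ((edge_verts he).1) (fun hq => hdj _ hprev hq)
    have hpart2 : ∀ i, k₁ + 1 ≤ i → i ≤ ℓ → ρ i ∈ wVerts m ρ' := by
      intro i h1 h2
      have := hpart2' (i - (k₁ + 1)) (by omega)
      rw [show k₁ + 1 + (i - (k₁ + 1)) = i from by omega] at this
      exact this
    -- ===== heights =====
    have hh0 : (ρ 0).2 ≤ a2 := by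
      have h' := hmin k₁ (by omega)
      rw [hbk] at h'
      exact h'
    have hhl : a2 + 1 ≤ (ρ ℓ).2 := by
      have h' := hmax j₁ (by omega)
      rw [hbj] at h'
      exact h'
    -- ===== leftness corollaries =====
    have hL1 : ∀ v ∈ wVerts m ρ', v.2 = a2 → v.1 < a1 := by
      intro v hv h2
      exact hleft v hv (a1, a2) hvAQ h2.symm
    have hL2 : ∀ v ∈ wVerts m ρ', v.2 = a2 + 1 → v.1 < a1 := by
      intro v hv h2
      exact hleft v hv (a1, a2 + 1) hvBQ h2.symm
    -- ===== the parity engine =====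
    have hstep1 : ∀ i < j₁ - 1, IsStep (ρ i) (ρ (i + 1)) := fun i hi => hρ.1 i (by omega)
    have hneidx : ∀ t, t ≤ j₁ - 1 → ∀ s', k₁ + 1 ≤ s' → s' ≤ ℓ → ρ t = ρ s' → False := by
      intro t ht s' hs1 hs2 heq
      have := hinj t (by omega) s' (by omega) heq
      omega
    obtain ⟨X, hXgt, hXall⟩ : ∃ X : ℤ, a1 < X ∧ ∀ i ≤ ℓ, (ρ i).1 < X := by
      have hne : ((Finset.range (ℓ + 1)).image (fun i => (ρ i).1)).Nonempty :=
        ⟨(ρ 0).1, Finset.mem_image.mpr ⟨0, Finset.mem_range.mpr (by omega), rfl⟩⟩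
      set M := ((Finset.range (ℓ + 1)).image (fun i => (ρ i).1)).max' hne with hM
      refine ⟨M + 1, ?_, ?_⟩
      · have hmemk : (ρ k₁).1 ∈ (Finset.range (ℓ + 1)).image (fun i => (ρ i).1) :=
          Finset.mem_image.mpr ⟨k₁, Finset.mem_range.mpr (by omega), rfl⟩
        have h' := Finset.le_max' _ ((ρ k₁).1) hmemk
        rw [← hM, hbk] at h'
        have : a1 ≤ M := h'
        omega
      · intro i hi
        have hmemi : (ρ i).1 ∈ (Finset.range (ℓ + 1)).image (fun i => (ρ i).1) :=
          Finset.mem_image.mpr ⟨i, Finset.mem_range.mpr (by omega), rfl⟩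
        have h' := Finset.le_max' _ ((ρ i).1) hmemi
        rw [← hM] at h'
        omega
    have hbase : Dfun ρ (j₁ - 1) a1 a2 X a2 = 1 := by
      unfold Dfun
      have hempty : ((Finset.range (j₁ - 1)).filter
          fun i => hcross (ρ i) (ρ (i + 1)) X a2) = ∅ := by
        rw [Finset.filter_eq_empty_iff]
        intro i hi
        rw [Finset.mem_range] at hi
        rintro ⟨h1, h2, ⟨h3a, h3b⟩ | ⟨h3a, h3b⟩⟩
        · have := hXall (i + 1) (by omega); omega
        · have := hXall i (by omega); omega
      rw [hempty, Finset.card_empty, if_pos (⟨le_refl _, by omega⟩ : a2 ≤ a2 ∧ a1 ≤ X)]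
    have hch : ∀ x : ℤ, a1 - 1 ≤ x →
        Dfun ρ (j₁ - 1) a1 a2 x a2 % 2 = Dfun ρ (j₁ - 1) a1 a2 (x + 1) a2 % 2 := by
      intro x hx
      apply Dfun_horiz ρ (j₁ - 1) a1 a2 x a2 hstep1 _ _ hc1j
      · intro i hi hvc
        obtain ⟨hv1, hv2, hv3⟩ := hvc
        rcases hv3 with ⟨hv3a, hv3b⟩ | ⟨hv3a, hv3b⟩
        · have hei : ρ i = (x, a2) := Prod.ext hv1 hv3a
          rcases lt_or_ge x a1 with hxa | hxa
          · have hxeq : x = a1 - 1 := by omega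
            rw [hxeq] at hei
            exact hneidx i (by omega) (k₁ + 1) (by omega) (by omega) (hei.trans hc0k.symm)
          · have hxlt : x < a1 := by
              have h' := hL1 _ (hpart1 i (by omega)) (by rw [hei])
              rwa [hei] at h'
            omega
        · have hei : ρ (i + 1) = (x, a2) := Prod.ext hv2 hv3b
          rcases lt_or_ge x a1 with hxa | hxa
          · have hxeq : x = a1 - 1 := by omega
            rw [hxeq] at hei
            exact hneidx (i + 1) (by omega) (k₁ + 1) (by omega) (by omega)
              (hei.trans hc0k.symm)
          · have hxlt : x < a1 := by
              have h' := hL1 _ (hpart1 (i + 1) (by omega)) (by rw [hei])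
              rwa [hei] at h'
            omega
      · rintro ⟨hcon1, hcon2⟩
        omega
    have hdesc : ∀ n : ℕ, ∀ x : ℤ, x = X - n → a1 - 1 ≤ x →
        Dfun ρ (j₁ - 1) a1 a2 x a2 % 2 = 1 := by
      intro n
      induction n with
      | zero =>
        intro x hx _
        have hxeq : x = X := by push_cast at hx; omega
        rw [hxeq, hbase]
      | succ n ih =>
        intro x hx hxge
        rw [hch x hxge]
        exact ih (x + 1) (by push_cast at hx ⊢; omega) (by omega)
    have hstart : Dfun ρ (j₁ - 1) a1 a2 (a1 - 1) a2 % 2 = 1 := by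
      apply hdesc (X - (a1 - 1)).toNat (a1 - 1) _ (le_refl _)
      rw [Int.toNat_of_nonneg (by omega)]
      ring
    have hend0 : Dfun ρ (j₁ - 1) a1 a2 (ρ ℓ).1 (ρ ℓ).2 = 0 := by
      unfold Dfun
      have hempty : ((Finset.range (j₁ - 1)).filter
          fun i => hcross (ρ i) (ρ (i + 1)) (ρ ℓ).1 (ρ ℓ).2) = ∅ := by
        rw [Finset.filter_eq_empty_iff]
        intro i hi
        rw [Finset.mem_range] at hi
        rintro ⟨h1, h2, _⟩
        have := hmax i (by omega)
        omega
      rw [hempty, Finset.card_empty, if_neg]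
      rintro ⟨hcon, _⟩
      omega
    have hwalk : ∀ i, k₁ + 1 ≤ i → i < ℓ →
        Dfun ρ (j₁ - 1) a1 a2 (ρ i).1 (ρ i).2 % 2
          = Dfun ρ (j₁ - 1) a1 a2 (ρ (i + 1)).1 (ρ (i + 1)).2 % 2 := by
      intro i hi hil
      have hvρ : ρ i ∈ wVerts m ρ' := hpart2 i hi (by omega)
      have hwρ : ρ (i + 1) ∈ wVerts m ρ' := hpart2 (i + 1) (by omega) (by omega)
      rcases isStep_iff.mp (hρ.1 i hil) with ⟨h1, h2⟩ | ⟨h1, h2⟩ | ⟨h1, h2⟩ | ⟨h1, h2⟩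
      · -- step to the right
        rw [h1, h2]
        apply Dfun_horiz ρ (j₁ - 1) a1 a2 (ρ i).1 (ρ i).2 hstep1 _ _ hc1j
        · intro t ht hvc
          obtain ⟨hv1, hv2, hv3⟩ := hvc
          rcases hv3 with ⟨hv3a, hv3b⟩ | ⟨hv3a, hv3b⟩
          · exact hneidx t (by omega) i (by omega) (by omega) (Prod.ext hv1 hv3a)
          · exact hneidx (t + 1) (by omega) i (by omega) (by omega) (Prod.ext hv2 hv3b)
        · rintro ⟨hcon1, hcon2⟩
          have := hmin i (by omega)
          omega
      · -- step to the left
        rw [h1, h2]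
        have hres := Dfun_horiz ρ (j₁ - 1) a1 a2 ((ρ i).1 - 1) ((ρ i).2) hstep1 ?_ ?_ hc1j
        · rw [show (ρ i).1 - 1 + 1 = (ρ i).1 from by ring] at hres
          exact hres.symm
        · intro t ht hvc
          obtain ⟨hv1, hv2, hv3⟩ := hvc
          rcases hv3 with ⟨hv3a, hv3b⟩ | ⟨hv3a, hv3b⟩
          · exact hneidx t (by omega) (i + 1) (by omega) (by omega)
              (Prod.ext (by omega) (by omega))
          · exact hneidx (t + 1) (by omega) (i + 1) (by omega) (by omega)
              (Prod.ext (by omega) (by omega))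
        · rintro ⟨hcon1, hcon2⟩
          have := hmin i (by omega)
          omega
      · -- step up
        rw [h1, h2]
        have hres := Dfun_vert ρ (j₁ - 1) a1 a2 (ρ i).1 (ρ i).2 ?_ ?_
        · rw [hres]
        · rintro t ht ⟨⟨hh1, hh2, hh3⟩, hh4⟩
          rcases hh3 with ⟨h3a, h3b⟩ | ⟨h3a, h3b⟩
          · exact hneidx (t + 1) (by omega) (i + 1) (by omega) (by omega)
              (Prod.ext (by omega) (by omega))
          · exact hneidx t (by omega) (i + 1) (by omega) (by omega)
              (Prod.ext (by omega) (by omega))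
        · rintro ⟨hcon1, hcon2⟩
          have := hL2 _ hwρ (by omega)
          omega
      · -- step down
        rw [h1, h2]
        have hres := Dfun_vert ρ (j₁ - 1) a1 a2 (ρ i).1 ((ρ i).2 - 1) ?_ ?_
        · rw [show (ρ i).2 - 1 + 1 = (ρ i).2 from by ring] at hres
          exact congrArg (fun z => z % 2) hres.symm
        · rintro t ht ⟨⟨hh1, hh2, hh3⟩, hh4⟩
          rcases hh3 with ⟨h3a, h3b⟩ | ⟨h3a, h3b⟩
          · exact hneidx (t + 1) (by omega) i (by omega) (by omega)
              (Prod.ext (by omega) (by omega))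
          · exact hneidx t (by omega) i (by omega) (by omega)
              (Prod.ext (by omega) (by omega))
        · rintro ⟨hcon1, hcon2⟩
          have := hL2 _ hvρ (by omega)
          omega
    have hP2 : ∀ n, k₁ + 1 + n ≤ ℓ →
        Dfun ρ (j₁ - 1) a1 a2 (ρ (k₁ + 1 + n)).1 (ρ (k₁ + 1 + n)).2 % 2 = 1 := by
      intro n
      induction n with
      | zero =>
        intro _
        rw [hc0k]
        exact hstart
      | succ n ih =>
        intro hn
        rw [show k₁ + 1 + (n + 1) = (k₁ + 1 + n) + 1 from by omega]
        rw [← hwalk (k₁ + 1 + n) (by omega) (by omega)]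
        exact ih (by omega)
    have hfinal := hP2 (ℓ - (k₁ + 1)) (by omega)
    rw [show k₁ + 1 + (ℓ - (k₁ + 1)) = ℓ from by omega] at hfinal
    rw [hend0] at hfinal
    simp at hfinal
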